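/- arXiv:2009.14762 — 7 statements merged into one kernel-verified Lean document; each statement's English description precedes it below -/
import Mathlib

section
/- The sequence a(n) = \sum_{k=0}^{n} \binom{n}{k}^2 \binom{n+k}{k}^2 of Apéry numbers satisfies the recursion n^3 a(n) - (34 n^3 - 51 n^2 + 27 n - 5) a(n-1) + (n-1)^3 a(n-2) = 0 for every integer n \ge 2. -/
open Finset

private def Fap (n k : ℕ) : ℤ := (n.choose k : ℤ)^2 * ((n+k).choose k : ℤ)^2

private def Bc (m k : ℕ) : ℤ :=
  4*(2*(m:ℤ)+3)*((k:ℤ)*(2*(k:ℤ)+1) - (2*(m:ℤ)+3)^2)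
    * ((m+1).choose k : ℤ)^2 * ((m+1+k).choose k : ℤ)^2

private def gc (m k : ℕ) : ℤ := if k = 0 then 0 else Bc m (k-1)

private lemma absorb (n k : ℕ) :
    (n + k + 1) * (n + k).choose k = (n + 1) * ((n + k + 1).choose k) := by
  have h := Nat.add_one_mul_choose_eq (n + k) n
  have e1 : (n+k).choose n = (n+k).choose k := by
    rw [← Nat.choose_symm (Nat.le_add_left k n)]; congr 1; omega
  have e2 : (n+k+1).choose (n+1) = (n+k+1).choose k := by
    rw [← Nat.choose_symm (by omega : k ≤ n+k+1)]; congr 1; omega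
  rw [e1, e2] at h
  rw [h, mul_comm]

private lemma cert_mid (m j : ℕ) (hj : j ≤ m) :
    ((m:ℤ)+2)^3 * Fap (m+2) (j+1)
      - (34*((m:ℤ)+2)^3 - 51*((m:ℤ)+2)^2 + 27*((m:ℤ)+2) - 5) * Fap (m+1) (j+1)
      + ((m:ℤ)+1)^3 * Fap m (j+1)
    = Bc m (j+1) - Bc m j := by
  unfold Fap Bc
  simp only [show m+2+(j+1) = m+j+3 from by omega, show m+1+(j+1) = m+j+2 from by omega,
    show m+(j+1) = m+j+1 from by omega, show m+1+j = m+j+1 from by omega]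
  have M1 : ((m:ℚ)+1) ≠ 0 := by positivity
  have M2 : ((m:ℚ)+2) ≠ 0 := by positivity
  have D1 : ((m:ℚ)+1-(j:ℚ)) ≠ 0 := by
    have : (j:ℚ) ≤ (m:ℚ) := by exact_mod_cast hj
    nlinarith
  have D2 : ((m:ℚ)+(j:ℚ)+2) ≠ 0 := by positivity
  have e1 : ((m+2).choose (j+1) : ℚ)
      = ((m:ℚ)+2)*((m+1).choose (j+1) : ℚ) / ((m:ℚ)+1-(j:ℚ)) := by
    rw [eq_div_iff D1]
    have h := Nat.choose_mul_succ_eq (m+1) (j+1)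
    rw [show m+1+1 = m+2 from rfl, show m+1+1-(j+1) = m+1-j from by omega] at h
    have h' : (((m+1).choose (j+1) : ℚ)) * ((m:ℚ)+2)
        = ((m+2).choose (j+1) : ℚ) * (((m+1-j : ℕ)) : ℚ) := by exact_mod_cast h
    rw [Nat.cast_sub (by omega : j ≤ m+1)] at h'
    push_cast at h' ⊢
    linarith [h']
  have e2 : (m.choose (j+1) : ℚ)
      = ((m:ℚ)+1-(j:ℚ)-1)*((m+1).choose (j+1) : ℚ) / ((m:ℚ)+1) := by
    rw [eq_div_iff M1]
    have h := Nat.choose_mul_succ_eq m (j+1)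
    have h' : ((m.choose (j+1) : ℚ)) * ((m:ℚ)+1)
        = (((m+1).choose (j+1) : ℚ)) * (((m+1-(j+1) : ℕ)) : ℚ) := by exact_mod_cast h
    rw [Nat.cast_sub (by omega : j+1 ≤ m+1)] at h'
    push_cast at h' ⊢
    linarith [h']
  have e3 : ((m+j+3).choose (j+1) : ℚ)
      = ((m:ℚ)+(j:ℚ)+3)*((m+j+2).choose (j+1) : ℚ) / ((m:ℚ)+2) := by
    rw [eq_div_iff M2]
    have h := absorb (m+1) (j+1)
    rw [show m+1+(j+1)+1 = m+j+3 from by omega, show m+1+(j+1) = m+j+2 from by omega,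
      show m+1+1 = m+2 from rfl] at h
    have h' : ((m:ℚ)+(j:ℚ)+3) * ((m+j+2).choose (j+1) : ℚ)
        = ((m:ℚ)+2) * ((m+j+3).choose (j+1) : ℚ) := by exact_mod_cast h
    linarith [h']
  have e4 : ((m+j+1).choose (j+1) : ℚ)
      = ((m:ℚ)+1)*((m+j+2).choose (j+1) : ℚ) / ((m:ℚ)+(j:ℚ)+2) := by
    rw [eq_div_iff D2]
    have h := absorb m (j+1)
    rw [show m+(j+1)+1 = m+j+2 from by omega, show m+(j+1) = m+j+1 from by omega] at h
    have h' : ((m:ℚ)+(j:ℚ)+2) * ((m+j+1).choose (j+1) : ℚ)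
        = ((m:ℚ)+1) * ((m+j+2).choose (j+1) : ℚ) := by exact_mod_cast h
    linarith [h']
  have e5 : ((m+1).choose j : ℚ)
      = ((j:ℚ)+1)*((m+1).choose (j+1) : ℚ) / ((m:ℚ)+1-(j:ℚ)) := by
    rw [eq_div_iff D1]
    have h := Nat.choose_succ_right_eq (m+1) j
    have h' : ((m+1).choose (j+1) : ℚ) * ((j:ℚ)+1)
        = ((m+1).choose j : ℚ) * (((m+1-j : ℕ)) : ℚ) := by exact_mod_cast h
    rw [Nat.cast_sub (by omega : j ≤ m+1)] at h'
    push_cast at h'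
    linarith [h']
  have e6 : ((m+j+1).choose j : ℚ)
      = ((j:ℚ)+1)*((m+j+2).choose (j+1) : ℚ) / ((m:ℚ)+(j:ℚ)+2) := by
    rw [eq_div_iff D2]
    have h := Nat.add_one_mul_choose_eq (m+j+1) j
    rw [show m+j+1+1 = m+j+2 from by omega] at h
    have h' : ((m:ℚ)+(j:ℚ)+2) * ((m+j+1).choose j : ℚ)
        = ((m+j+2).choose (j+1) : ℚ) * ((j:ℚ)+1) := by exact_mod_cast h
    linarith [h']
  apply Int.cast_injective (α := ℚ)
  push_cast
  rw [e1, e2, e3, e4, e5, e6]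
  field_simp
  ring

private lemma cert (m k : ℕ) (hk : k ≤ m + 2) :
    ((m:ℤ)+2)^3 * Fap (m+2) k
      - (34*((m:ℤ)+2)^3 - 51*((m:ℤ)+2)^2 + 27*((m:ℤ)+2) - 5) * Fap (m+1) k
      + ((m:ℤ)+1)^3 * Fap m k
    = gc m (k+1) - gc m k := by
  rcases k with _ | j
  · -- k = 0
    simp only [Fap, Bc, gc, if_pos rfl, Nat.choose_zero_right, Nat.add_zero]
    push_cast [Nat.choose_zero_right, Nat.add_zero]
    ring
  · rw [show gc m (j+1+1) = Bc m (j+1) from rfl, show gc m (j+1) = Bc m j from rfl]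
    rcases Nat.lt_or_ge j (m+1) with hj | hj
    · exact cert_mid m j (by omega)
    · -- j = m+1, i.e. k = m+2
      have hj' : j = m + 1 := by omega
      subst hj'
      have z1 : (m+1).choose (m+1+1) = 0 := Nat.choose_eq_zero_of_lt (by omega)
      have z2 : m.choose (m+1+1) = 0 := Nat.choose_eq_zero_of_lt (by omega)
      have hcb := Nat.succ_mul_centralBinom_succ (m+1)
      unfold Nat.centralBinom at hcb
      rw [show 2*(m+1+1) = m+2+(m+1+1) from by omega,
        show 2*(m+1) = m+1+(m+1) from by omega] at hcb
      have hC : ((m:ℚ)+1+1) * ((m+2+(m+1+1)).choose (m+1+1) : ℚ)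
          = 2*((m:ℚ)+1+((m:ℚ)+1)+1) * ((m+1+(m+1)).choose (m+1) : ℚ) := by
        exact_mod_cast hcb
      apply Int.cast_injective (α := ℚ)
      push_cast [Fap, Bc, z1, z2, Nat.choose_self]
      linear_combination ((((m:ℚ)+2)*((m+2+(m+1+1)).choose (m+1+1) : ℚ)
        + 2*(2*(m:ℚ)+3)*((m+1+(m+1)).choose (m+1) : ℚ)) * ((m:ℚ)+2)) * hC

private lemma telescope (m : ℕ) :
    ∑ k ∈ Finset.range (m+3),
      (((m:ℤ)+2)^3 * Fap (m+2) k
        - (34*((m:ℤ)+2)^3 - 51*((m:ℤ)+2)^2 + 27*((m:ℤ)+2) - 5) * Fap (m+1) k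
        + ((m:ℤ)+1)^3 * Fap m k) = 0 := by
  have h : ∀ k ∈ Finset.range (m+3),
      (((m:ℤ)+2)^3 * Fap (m+2) k
        - (34*((m:ℤ)+2)^3 - 51*((m:ℤ)+2)^2 + 27*((m:ℤ)+2) - 5) * Fap (m+1) k
        + ((m:ℤ)+1)^3 * Fap m k) = gc m (k+1) - gc m k := by
    intro k hk
    exact cert m k (by simpa using Nat.lt_succ_iff.mp (Finset.mem_range.mp hk))
  rw [Finset.sum_congr rfl h, Finset.sum_range_sub (gc m)]
  have : gc m (m+3) = 0 := by
    simp [gc, Bc, Nat.choose_eq_zero_of_lt (show m+1 < m+2 by omega)]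
  rw [this]
  simp [gc]

/-- The Apéry numbers `a n = ∑_{k=0}^n (n choose k)^2 ((n+k) choose k)^2` satisfy
Apéry's recursion `n³ a(n) - (34n³ - 51n² + 27n - 5) a(n-1) + (n-1)³ a(n-2) = 0`
for all `n ≥ 2`. -/
theorem apery_zeta3_recursion
    (a : ℕ → ℤ)
    (ha : ∀ n : ℕ, a n = ∑ k ∈ Finset.range (n + 1),
      ((n.choose k : ℤ)) ^ 2 * (((n + k).choose k : ℤ)) ^ 2) :
    ∀ n : ℕ, 2 ≤ n →
      (n : ℤ) ^ 3 * a n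
        - (34 * (n : ℤ) ^ 3 - 51 * (n : ℤ) ^ 2 + 27 * (n : ℤ) - 5) * a (n - 1)
        + ((n : ℤ) - 1) ^ 3 * a (n - 2) = 0 := by
  intro n hn
  obtain ⟨m, rfl⟩ : ∃ m, n = m + 2 := ⟨n - 2, by omega⟩
  have hsum : ∀ N : ℕ, a N = ∑ k ∈ Finset.range (N+1), Fap N k := by
    intro N; rw [ha]; rfl
  have h2 : a (m+2) = ∑ k ∈ Finset.range (m+3), Fap (m+2) k := hsum (m+2)
  have h1 : a (m+2-1) = ∑ k ∈ Finset.range (m+3), Fap (m+1) k := by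
    rw [show m+2-1 = m+1 from rfl, hsum (m+1), Finset.sum_range_succ (Fap (m+1)) (m+2)]
    have : Fap (m+1) (m+2) = 0 := by
      simp [Fap, Nat.choose_eq_zero_of_lt (show m+1 < m+2 by omega)]
    rw [this, add_zero]
  have h0 : a (m+2-2) = ∑ k ∈ Finset.range (m+3), Fap m k := by
    rw [show m+2-2 = m from rfl, hsum m, Finset.sum_range_succ (Fap m) (m+2),
      Finset.sum_range_succ (Fap m) (m+1)]
    have t1 : Fap m (m+1) = 0 := by
      simp [Fap, Nat.choose_eq_zero_of_lt (show m < m+1 by omega)]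
    have t2 : Fap m (m+2) = 0 := by
      simp [Fap, Nat.choose_eq_zero_of_lt (show m < m+2 by omega)]
    rw [t1, t2, add_zero, add_zero]
  rw [h2, h1, h0]
  have := telescope m
  push_cast
  rw [Finset.mul_sum, Finset.mul_sum, Finset.mul_sum, ← Finset.sum_sub_distrib,
    ← Finset.sum_add_distrib]
  rw [← this]
  apply Finset.sum_congr rfl
  intro k _
  ring
end

section
/- The sequence a(n) = \sum_{k=0}^{n} \binom{n}{k}^2 \binom{n+k}{k} satisfies the recursion n^2 a(n) - (11 n^2 - 11 n + 3) a(n-1) - (n-1)^2 a(n-2) = 0 for every integer n \ge 2. -/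
/-!
Creative telescoping (Zeilberger's algorithm). With `F n k = C(n,k)² C(n+k,k)`, the combination
`n² F n k - (11n² - 11n + 3) F (n-1) k - (n-1)² F (n-2) k` equals `G n (k+1) - G n k` for a
certificate `G n k` that is `F n k` times a rational function of `n` and `k`, so summing over `k`
telescopes to zero. The shift relations of binomial coefficients write every term as `F n k` times
a rational function, which reduces the local identity to an identity of rational functions; over
a field these relations hold for all `k`, so no boundary cases arise.
-/

open Finset

section ChooseShift

variable {K : Type*} [Field K] [CharZero K]

theorem Nat.cast_choose_eq_succ_choose_mul_div (n k : ℕ) :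
    (n.choose k : K) = (n + 1).choose k * ((n : K) + 1 - k) / (n + 1) := by
  rw [eq_div_iff (by norm_cast)]
  rcases le_or_gt k (n + 1) with hk | hk
  · have h := congrArg (Nat.cast : ℕ → K) (Nat.choose_mul_succ_eq n k)
    push_cast [Nat.cast_sub hk] at h
    linear_combination h
  · simp [Nat.choose_eq_zero_of_lt hk, Nat.choose_eq_zero_of_lt (Nat.lt_of_succ_lt hk)]

theorem Nat.cast_choose_add_eq_succ_choose_mul_div (n k : ℕ) :
    ((n + k).choose k : K) = (n + 1 + k).choose k * ((n : K) + 1) / (n + 1 + k) := by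
  rw [eq_div_iff (by norm_cast; omega)]
  have h := Nat.choose_mul_succ_eq (n + k) k
  rw [show n + k + 1 - k = n + 1 by omega, show n + k + 1 = n + 1 + k by omega] at h
  exact_mod_cast h

theorem Nat.cast_choose_succ_right (n k : ℕ) :
    (n.choose (k + 1) : K) = n.choose k * ((n : K) - k) / (k + 1) := by
  rw [eq_div_iff (by norm_cast)]
  rcases le_or_gt k n with hk | hk
  · have h := congrArg (Nat.cast : ℕ → K) (Nat.choose_succ_right_eq n k)
    push_cast [Nat.cast_sub hk] at h
    exact h
  · simp [Nat.choose_eq_zero_of_lt hk, Nat.choose_eq_zero_of_lt (Nat.lt_succ_of_lt hk)]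

theorem Nat.cast_succ_choose_succ (n k : ℕ) :
    ((n + 1).choose (k + 1) : K) = n.choose k * ((n : K) + 1) / (k + 1) := by
  rw [eq_div_iff (by norm_cast)]
  exact_mod_cast (Nat.add_one_mul_choose_eq n k).symm.trans (mul_comm _ _)

end ChooseShift

def aperyTerm (n k : ℕ) : ℚ :=
  (n.choose k : ℚ) ^ 2 * ((n + k).choose k : ℚ)

def aperyNumber (n : ℕ) : ℚ :=
  ∑ k ∈ range (n + 1), aperyTerm n k

-- The certificate `G n k` of the header, indexed by `m = n - 2`.
def aperyCertificate (m k : ℕ) : ℚ :=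
  aperyTerm (m + 2) k * (k : ℚ) ^ 3 * ((k : ℚ) ^ 2 + (6 * m + 7) * k - (m + 2) * (11 * m + 15)) /
    ((m + 2) * (m + k + 1) * (m + k + 2))

theorem aperyTerm_eq_zero_of_lt {n k : ℕ} (h : n < k) : aperyTerm n k = 0 := by
  simp [aperyTerm, Nat.choose_eq_zero_of_lt h]

theorem aperyNumber_eq_sum_range {n N : ℕ} (h : n ≤ N) :
    aperyNumber n = ∑ k ∈ range (N + 1), aperyTerm n k :=
  sum_subset (range_subset_range.2 (by omega)) fun k hkN hkn =>
    aperyTerm_eq_zero_of_lt (by simp at hkN hkn; omega)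

theorem aperyCertificate_zero (m : ℕ) : aperyCertificate m 0 = 0 := by
  simp [aperyCertificate]

theorem aperyCertificate_of_lt {m k : ℕ} (h : m + 2 < k) : aperyCertificate m k = 0 := by
  simp [aperyCertificate, aperyTerm_eq_zero_of_lt h]

theorem aperyTerm_recurrence_eq_sub (m k : ℕ) :
    ((m : ℚ) + 2) ^ 2 * aperyTerm (m + 2) k
      - (11 * ((m : ℚ) + 2) ^ 2 - 11 * ((m : ℚ) + 2) + 3) * aperyTerm (m + 1) k
      - ((m : ℚ) + 1) ^ 2 * aperyTerm m k
    = aperyCertificate m (k + 1) - aperyCertificate m k := by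
  have hchoose (j : ℕ) := Nat.cast_choose_eq_succ_choose_mul_div (K := ℚ) j k
  have hchoose_add (j : ℕ) := Nat.cast_choose_add_eq_succ_choose_mul_div (K := ℚ) j k
  have hchoose_succ := Nat.cast_choose_succ_right (K := ℚ) (m + 2) k
  have hchoose_succ_succ := Nat.cast_succ_choose_succ (K := ℚ) (m + 2 + k) k
  simp only [aperyCertificate, aperyTerm, Nat.cast_add, Nat.cast_one, Nat.cast_ofNat] at *
  rw [hchoose m, hchoose (m + 1), hchoose_add m, hchoose_add (m + 1),
    show m + 2 + (k + 1) = m + 2 + k + 1 by omega, hchoose_succ, hchoose_succ_succ]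
  push_cast
  field_simp
  ring

theorem aperyNumber_recurrence (m : ℕ) :
    ((m : ℚ) + 2) ^ 2 * aperyNumber (m + 2)
      - (11 * ((m : ℚ) + 2) ^ 2 - 11 * ((m : ℚ) + 2) + 3) * aperyNumber (m + 1)
      - ((m : ℚ) + 1) ^ 2 * aperyNumber m = 0 := by
  rw [aperyNumber_eq_sum_range (n := m + 1) (N := m + 2) (by omega),
    aperyNumber_eq_sum_range (n := m) (N := m + 2) (by omega), aperyNumber,
    mul_sum, mul_sum, mul_sum, ← sum_sub_distrib, ← sum_sub_distrib,
    sum_congr rfl fun k _ => aperyTerm_recurrence_eq_sub m k,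
    sum_range_sub, aperyCertificate_of_lt (by omega), aperyCertificate_zero, sub_zero]

/-- The Apéry numbers `a n = ∑_{k=0}^n (n choose k)^2 ((n+k) choose k)` satisfy
Apéry's recursion `n² a(n) - (11n² - 11n + 3) a(n-1) - (n-1)² a(n-2) = 0`
for all `n ≥ 2`. -/
theorem apery_zeta2_recursion
    (a : ℕ → ℤ)
    (ha : ∀ n : ℕ, a n = ∑ k ∈ Finset.range (n + 1),
      ((n.choose k : ℤ)) ^ 2 * (((n + k).choose k : ℤ))) :
    ∀ n : ℕ, 2 ≤ n →
      (n : ℤ) ^ 2 * a n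
        - (11 * (n : ℤ) ^ 2 - 11 * (n : ℤ) + 3) * a (n - 1)
        - ((n : ℤ) - 1) ^ 2 * a (n - 2) = 0 := by
  have ha_cast (n : ℕ) : (a n : ℚ) = aperyNumber n := by
    rw [ha, aperyNumber]; push_cast; rfl
  intro n hn
  obtain ⟨m, rfl⟩ : ∃ m, n = m + 2 := ⟨n - 2, by omega⟩
  have h := aperyNumber_recurrence m
  rw [← ha_cast, ← ha_cast, ← ha_cast] at h
  rw [show m + 2 - 1 = m + 1 from rfl, show m + 2 - 2 = m from rfl]
  qify
  linear_combination h
end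

section
/- For all complex numbers \lambda_1, \lambda_2, \lambda_3, the iterated contour integral over the unit torus satisfies (1/(2\pi i)^2) \oint_{|x_1|=1} \oint_{|x_2|=1} \exp(\lambda_1 x_1 + \lambda_2 x_2 + \lambda_3/(x_1 x_2)) \, (dx_2/x_2)(dx_1/x_1) = \sum_{m=0}^{\infty} (\lambda_1 \lambda_2 \lambda_3)^m / (m!)^3. -/
/-!
Expanding `exp (λ₃ / (x₁ x₂))` in powers of `(x₁ x₂)⁻¹` and integrating term by term, Cauchy's
formula `∮ exp (a z) / z ^ (m + 1) dz = 2πi a ^ m / m!` extracts one coefficient per variable: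
the inner integral is `2πi exp (λ₁ x₁) ∑ (λ₂ λ₃) ^ m x₁⁻ᵐ / (m!)²`, and integrating this again in
the same way gives `(2πi)² ∑ (λ₁ λ₂ λ₃) ^ m / (m!)³`.
-/

open Complex Metric
open scoped Nat Real

theorem hasSum_circleIntegral_of_dominated_convergence {E : Type*} [NormedAddCommGroup E]
    [NormedSpace ℂ E] [CompleteSpace E] {c : ℂ} {R : ℝ} {F : ℕ → ℂ → E} {bound : ℕ → ℝ}
    (hF : ∀ n, ContinuousOn (F n) (sphere c |R|))
    (h_bound : ∀ n, ∀ z ∈ sphere c |R|, ‖F n z‖ ≤ bound n) (h_sum : Summable bound) :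
    HasSum (fun n ↦ ∮ z in C(c, R), F n z) (∮ z in C(c, R), ∑' n, F n z) := by
  have h_bound' (n : ℕ) (θ : ℝ) :
      ‖deriv (circleMap c R) θ • F n (circleMap c R θ)‖ ≤ |R| * bound n := by
    rw [norm_smul, deriv_circleMap, norm_mul, norm_circleMap_zero, norm_I, mul_one]
    exact mul_le_mul_of_nonneg_left (h_bound n _ (circleMap_mem_sphere' c R θ)) (abs_nonneg R)
  refine intervalIntegral.hasSum_integral_of_dominated_convergence (fun n _ ↦ |R| * bound n)
    (fun n ↦ ((circleIntegrable_iff R).1 (hF n).circleIntegrable').def'.aestronglyMeasurable)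
    (fun n ↦ .of_forall fun θ _ ↦ h_bound' n θ)
    (.of_forall fun _ _ ↦ h_sum.mul_left |R|) intervalIntegrable_const
    (.of_forall fun θ _ ↦ ?_)
  exact (Summable.of_norm_bounded h_sum fun n ↦
    h_bound n _ (circleMap_mem_sphere' c R θ)).hasSum.const_smul _

theorem circleIntegral_exp_mul_div_pow_succ (a : ℂ) {R : ℝ} (hR : 0 < R) (m : ℕ) :
    ∮ z in C(0, R), exp (a * z) / z ^ (m + 1) = 2 * π * I * a ^ m / m ! := by
  have hdiff : DifferentiableOn ℂ (fun z ↦ exp (a * z)) (closedBall 0 R) := by fun_prop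
  have := hdiff.circleIntegral_one_div_sub_center_pow_smul hR m
  simp only [sub_zero, smul_eq_mul, iteratedDeriv_cexp_const_mul, mul_zero, exp_zero,
    mul_one] at this
  rw [mul_div_right_comm, ← this]
  congr 1 with z
  ring

theorem circleIntegral_exp_mul_mul_tsum_inv_pow_div (a : ℂ) {c : ℕ → ℂ}
    (hc : Summable fun m ↦ ‖c m‖) :
    ∮ z in C(0, 1), exp (a * z) * (∑' m, c m * z⁻¹ ^ m) / z
      = 2 * π * I * ∑' m, c m * a ^ m / m ! := by
  set F : ℕ → ℂ → ℂ := fun m z ↦ c m * (exp (a * z) / z ^ (m + 1))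
  have hF_cont (m : ℕ) : ContinuousOn (F m) (sphere 0 |1|) := by
    refine continuousOn_const.mul (ContinuousOn.div (by fun_prop) (by fun_prop) fun z hz ↦ ?_)
    exact pow_ne_zero _ (ne_of_mem_sphere hz (by norm_num))
  have hF_bound (m : ℕ) : ∀ z ∈ sphere (0 : ℂ) |1|, ‖F m z‖ ≤ ‖c m‖ * Real.exp ‖a‖ := by
    intro z hz
    have hz : ‖z‖ = 1 := by simpa using hz
    calc ‖F m z‖ = ‖c m‖ * ‖exp (a * z)‖ := by simp [F, hz]
      _ ≤ ‖c m‖ * Real.exp ‖a * z‖ := by gcongr; exact norm_exp_le_exp_norm _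
      _ = ‖c m‖ * Real.exp ‖a‖ := by rw [norm_mul, hz, mul_one]
  have hF_integral (m : ℕ) : ∮ z in C(0, 1), F m z = 2 * π * I * (c m * a ^ m / m !) := by
    rw [circleIntegral.integral_const_mul, circleIntegral_exp_mul_div_pow_succ a one_pos]
    ring
  calc ∮ z in C(0, 1), exp (a * z) * (∑' m, c m * z⁻¹ ^ m) / z
      = ∮ z in C(0, 1), ∑' m, F m z := by
        congr 1 with z
        rw [← tsum_mul_left, ← tsum_div_const]
        congr 1 with m
        simp only [F, inv_pow, pow_succ]
        ring
    _ = ∑' m, 2 * π * I * (c m * a ^ m / m !) := by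
        rw [← (hasSum_circleIntegral_of_dominated_convergence hF_cont hF_bound
          (hc.mul_right _)).tsum_eq]
        exact tsum_congr hF_integral
    _ = 2 * π * I * ∑' m, c m * a ^ m / m ! := tsum_mul_left

theorem Real.summable_pow_div_factorial_sq (r : ℝ) :
    Summable fun m : ℕ ↦ r ^ m / (m ! : ℝ) ^ 2 := by
  refine .of_norm_bounded (Real.summable_pow_div_factorial |r|) fun m ↦ ?_
  have hm : (1 : ℝ) ≤ m ! := mod_cast m.factorial_pos
  rw [norm_div, norm_pow, Real.norm_eq_abs, norm_pow, Real.norm_natCast]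
  gcongr
  nlinarith

theorem circleIntegral_exp_mul_add_div_div (a b : ℂ) :
    ∮ z in C(0, 1), exp (a * z + b / z) / z = 2 * π * I * ∑' m, (a * b) ^ m / (m ! : ℂ) ^ 2 := by
  have hexp (z : ℂ) : exp (b / z) = ∑' m, b ^ m / m ! * z⁻¹ ^ m := by
    rw [exp_eq_exp_ℂ, NormedSpace.exp_eq_tsum_div]
    exact tsum_congr fun m ↦ by ring
  have hc : Summable fun m ↦ ‖b ^ m / (m ! : ℂ)‖ := by
    simpa using Real.summable_pow_div_factorial ‖b‖
  simp_rw [exp_add, hexp]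
  rw [circleIntegral_exp_mul_mul_tsum_inv_pow_div a hc]
  exact congrArg _ (tsum_congr fun m ↦ by ring)

/-- The exponential (irregular) period of `f = λ₁x₁ + λ₂x₂ + λ₃/(x₁x₂)` over the unit torus:
`(1/(2πi)²) ∮∮ e^f dx₂/x₂ dx₁/x₁ = ∑_m (λ₁λ₂λ₃)^m/(m!)³`. -/
theorem torus_exponential_period (l₁ l₂ l₃ : ℂ) :
    (1 / (2 * (Real.pi : ℂ) * Complex.I) ^ 2) *
      (∮ x₁ in C(0, 1), (∮ x₂ in C(0, 1),
        Complex.exp (l₁ * x₁ + l₂ * x₂ + l₃ / (x₁ * x₂)) / x₂) / x₁)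
    = ∑' m : ℕ, (l₁ * l₂ * l₃) ^ m / (m.factorial : ℂ) ^ 3 := by
  set c : ℕ → ℂ := fun m ↦ (l₂ * l₃) ^ m / (m ! : ℂ) ^ 2
  have hc : Summable fun m ↦ ‖c m‖ := by
    simpa [c] using Real.summable_pow_div_factorial_sq ‖l₂ * l₃‖
  have h_inner (x₁ : ℂ) : ∮ x₂ in C(0, 1), exp (l₁ * x₁ + l₂ * x₂ + l₃ / (x₁ * x₂)) / x₂
      = 2 * π * I * (exp (l₁ * x₁) * ∑' m, c m * x₁⁻¹ ^ m) := by
    calc _ = exp (l₁ * x₁) * ∮ x₂ in C(0, 1), exp (l₂ * x₂ + l₃ / x₁ / x₂) / x₂ := by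
          rw [← circleIntegral.integral_const_mul]
          congr 1 with x₂
          rw [add_assoc, exp_add, div_div, mul_div_assoc]
      _ = _ := by
          rw [circleIntegral_exp_mul_add_div_div]
          simp only [c]
          rw [tsum_congr fun m ↦ show (l₂ * (l₃ / x₁)) ^ m / (m ! : ℂ) ^ 2
            = (l₂ * l₃) ^ m / (m ! : ℂ) ^ 2 * x₁⁻¹ ^ m by ring]
          ring
  simp_rw [h_inner, mul_div_assoc, circleIntegral.integral_const_mul, ← mul_div_assoc,
    circleIntegral_exp_mul_mul_tsum_inv_pow_div l₁ hc]
  rw [tsum_congr fun m ↦ show c m * l₁ ^ m / m ! = (l₁ * l₂ * l₃) ^ m / (m ! : ℂ) ^ 3 by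
    simp only [c]; ring]
  field_simp [two_pi_I_ne_zero]
end

section
/- Let f(t) = \sum_{k=0}^{\infty} c_k t^k be a power series with complex coefficients and radius of convergence R > 0, and let 0 < r < R. Then for every complex number s, the Fourier-Laplace transform of f is given by the contour integral formula (1/(2\pi i)) \oint_{|t|=r} f(t) \, e^{s/t} \, \frac{dt}{t} = \sum_{k=0}^{\infty} \frac{c_k}{k!} s^k, the series on the right converging. -/
/-!
On `|t| = r` both `f(t) = ∑ cₖ tᵏ` and `e^{s/t} = ∑ sⁿ / (n! tⁿ)` converge absolutely, so the
integrand is the absolutely convergent double series `∑ₖ ∑ₙ cₖ sⁿ / n! · t^{k-n-1}`, whose terms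
are bounded on the circle by a summable family. Hence the integral may be taken termwise, and
`∮ t^m dt` vanishes unless `m = -1`, so only the diagonal `k = n` survives, each term contributing
`2πi · cₖ sᵏ / k!`.
-/

open Real Complex MeasureTheory Metric Set Function Filter Asymptotics

theorem summable_norm_mul_pow_of_summable_mul_pow {𝕜 : Type*} [NormedDivisionRing 𝕜]
    {c : ℕ → 𝕜} {w : 𝕜} {r : ℝ} (h : Summable fun k => c k * w ^ k) (hr₀ : 0 ≤ r)
    (hr : r < ‖w‖) : Summable fun k => ‖c k‖ * r ^ k := by
  have hw : 0 < ‖w‖ := hr₀.trans_lt hr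
  have hbdd : (fun k => ‖c k * w ^ k‖) =O[atTop] (fun _ => (1 : ℝ)) :=
    h.tendsto_atTop_zero.norm.isBigO_one ℝ
  have hsplit : (fun k => ‖c k‖ * r ^ k) = fun k => ‖c k * w ^ k‖ * (r / ‖w‖) ^ k := by
    ext k
    rw [norm_mul, norm_pow, div_pow]
    field_simp
  refine summable_of_isBigO_nat
    (summable_geometric_of_lt_one (div_nonneg hr₀ hw.le) ((div_lt_one hw).2 hr)) ?_
  simpa [hsplit] using hbdd.mul (isBigO_refl (fun k => (r / ‖w‖) ^ k) atTop)

theorem hasSum_circleIntegral_of_norm_le {ι E : Type*} [Countable ι] [NormedAddCommGroup E]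
    [NormedSpace ℂ E] [CompleteSpace E] {F : ι → ℂ → E} {c : ℂ} {r : ℝ} {u : ι → ℝ}
    (hF : ∀ i, ContinuousOn (F i) (sphere c |r|)) (hu : Summable u)
    (hFu : ∀ i, ∀ z ∈ sphere c |r|, ‖F i z‖ ≤ u i) :
    HasSum (fun i => ∮ z in C(c, r), F i z) (∮ z in C(c, r), ∑' i, F i z) := by
  refine intervalIntegral.hasSum_integral_of_dominated_convergence (fun i _ => |r| * u i)
    (fun i => ?_) (fun i => .of_forall fun θ _ => ?_) (.of_forall fun _ _ => hu.mul_left _)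
    intervalIntegrable_const (.of_forall fun θ _ => ?_)
  · refine Continuous.aestronglyMeasurable ?_
    simp only [deriv_circleMap]
    exact ((continuous_circleMap 0 r).mul continuous_const).smul
      ((hF i).comp_continuous (continuous_circleMap c r) (circleMap_mem_sphere' c r))
  · simpa [deriv_circleMap, norm_smul] using
      mul_le_mul_of_nonneg_left (hFu i _ (circleMap_mem_sphere' c r θ)) (abs_nonneg r)
  · exact (hu.of_norm_bounded fun i => hFu i _ (circleMap_mem_sphere' c r θ)).hasSum.const_smul _

theorem circleIntegral_sub_zpow {c : ℂ} {r : ℝ} (hr : 0 < r) (n : ℤ) :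
    (∮ z in C(c, r), (z - c) ^ n) = if n = -1 then 2 * π * I else 0 := by
  split_ifs with hn
  · simpa [hn] using circleIntegral.integral_sub_inv_of_mem_ball (c := c) (mem_ball_self hr)
  · exact circleIntegral.integral_sub_zpow_of_ne hn c c r

noncomputable def fourierLaplaceTerm (c : ℕ → ℂ) (s : ℂ) (p : ℕ × ℕ) (z : ℂ) : ℂ :=
  c p.1 * s ^ p.2 / p.2.factorial * z ^ ((p.1 : ℤ) - p.2 - 1)

theorem fourierLaplaceTerm_eq_mul_div {c : ℕ → ℂ} {s z : ℂ} (hz : z ≠ 0) (p : ℕ × ℕ) :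
    fourierLaplaceTerm c s p z = c p.1 * z ^ p.1 * ((s / z) ^ p.2 / p.2.factorial) / z := by
  rw [fourierLaplaceTerm, zpow_sub₀ hz, zpow_sub₀ hz, zpow_natCast, zpow_natCast, zpow_one,
    div_pow]
  field_simp

theorem norm_fourierLaplaceTerm {c : ℕ → ℂ} {s z : ℂ} (hz : z ≠ 0) (p : ℕ × ℕ) :
    ‖fourierLaplaceTerm c s p z‖ =
      ‖c p.1‖ * ‖z‖ ^ p.1 * ((‖s‖ / ‖z‖) ^ p.2 / p.2.factorial) / ‖z‖ := by
  simp [fourierLaplaceTerm_eq_mul_div hz, norm_pow]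

theorem continuousOn_fourierLaplaceTerm (c : ℕ → ℂ) (s : ℂ) (p : ℕ × ℕ) :
    ContinuousOn (fourierLaplaceTerm c s p) {0}ᶜ :=
  continuousOn_const.mul (continuousOn_id.zpow₀ _ fun _ hz => Or.inl hz)

theorem tsum_fourierLaplaceTerm {c : ℕ → ℂ} {s z : ℂ} (hz : z ≠ 0)
    (hc : Summable fun k => ‖c k‖ * ‖z‖ ^ k) :
    ∑' p, fourierLaplaceTerm c s p z = (∑' k, c k * z ^ k) * exp (s / z) / z := by
  have hexp : HasSum (fun n : ℕ => (s / z) ^ n / n.factorial) (exp (s / z)) := by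
    simpa [← exp_eq_exp_ℂ] using NormedSpace.expSeries_div_hasSum_exp (s / z)
  have hexp_norm : Summable fun n : ℕ => ‖(s / z) ^ n / n.factorial‖ := by
    simpa [norm_div, norm_pow] using Real.summable_pow_div_factorial ‖s / z‖
  rw [← hexp.tsum_eq, tsum_mul_tsum_of_summable_norm (by simpa [norm_mul, norm_pow] using hc)
    hexp_norm, ← tsum_div_const]
  simp_rw [fourierLaplaceTerm_eq_mul_div hz]

theorem circleIntegral_fourierLaplaceTerm (c : ℕ → ℂ) (s : ℂ) {r : ℝ} (hr : 0 < r) (p : ℕ × ℕ) :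
    (∮ z in C(0, r), fourierLaplaceTerm c s p z) =
      if p.1 = p.2 then 2 * π * I * (c p.1 / p.1.factorial * s ^ p.1) else 0 := by
  have hint := circleIntegral_sub_zpow (c := 0) hr ((p.1 : ℤ) - p.2 - 1)
  simp only [sub_zero] at hint
  simp only [fourierLaplaceTerm, circleIntegral.integral_const_mul, hint]
  obtain ⟨k, n⟩ := p
  by_cases hkn : k = n
  · subst hkn
    simp only [sub_self, zero_sub, if_true]
    ring
  · have : (k : ℤ) - n - 1 ≠ -1 := by omega
    simp [this, hkn]

theorem hasSum_circleIntegral_fourierLaplaceTerm (c : ℕ → ℂ) (s : ℂ) {r : ℝ} (hr : 0 < r)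
    (hc : Summable fun k => ‖c k‖ * r ^ k) :
    HasSum (fun p => ∮ z in C(0, r), fourierLaplaceTerm c s p z)
      (∮ z in C(0, r), (∑' k, c k * z ^ k) * exp (s / z) / z) := by
  have hsphere : ∀ z ∈ sphere (0 : ℂ) |r|, z ≠ 0 ∧ ‖z‖ = r := fun z hz => by
    simp only [mem_sphere_zero_iff_norm, abs_of_pos hr] at hz
    exact ⟨norm_pos_iff.1 (hz ▸ hr), hz⟩
  have hintegrand : EqOn (fun z => ∑' p, fourierLaplaceTerm c s p z)
      (fun z => (∑' k, c k * z ^ k) * exp (s / z) / z) (sphere 0 r) := fun z hz => by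
    obtain ⟨hz0, hzr⟩ := hsphere z (by rwa [abs_of_pos hr])
    exact tsum_fourierLaplaceTerm hz0 (hzr ▸ hc)
  rw [← circleIntegral.integral_congr hr.le hintegrand]
  refine hasSum_circleIntegral_of_norm_le
    (fun p => (continuousOn_fourierLaplaceTerm c s p).mono fun z hz => (hsphere z hz).1)
    ((hc.mul_of_nonneg (Real.summable_pow_div_factorial (‖s‖ / r)) (fun _ => by positivity)
      fun _ => by positivity).div_const r) fun p z hz => ?_
  rw [norm_fourierLaplaceTerm (hsphere z hz).1, (hsphere z hz).2]

theorem hasSum_ite_fst_eq_snd_iff {α M : Type*} [DecidableEq α] [AddCommMonoid M]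
    [TopologicalSpace M] {f : α → M} {a : M} :
    HasSum (fun p : α × α => if p.1 = p.2 then f p.1 else 0) a ↔ HasSum f a := by
  have hoff : ∀ p ∉ range fun x : α => (x, x), (if p.1 = p.2 then f p.1 else 0) = 0 :=
    fun p hp => if_neg fun h => hp ⟨p.1, Prod.ext rfl h⟩
  simpa [comp_def] using (Injective.hasSum_iff (fun _ _ h => congrArg Prod.fst h) hoff).symm

/-- Fourier–Laplace transform by contour integral: if `f(t) = ∑ c_k t^k` has radius of
convergence `R > 0` and `0 < r < R`, then for every `s ∈ ℂ`,
`(1/(2πi)) ∮_{|t|=r} f(t) e^{s/t} dt/t = ∑_k (c_k/k!) s^k`, the series converging. -/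
theorem fourier_laplace_transform_formula
    (c : ℕ → ℂ) (R r : ℝ) (hr : 0 < r) (hrR : r < R)
    (hconv : ∀ t : ℂ, ‖t‖ < R → Summable fun k : ℕ => c k * t ^ k) (s : ℂ) :
    HasSum (fun k : ℕ => c k / (k.factorial : ℂ) * s ^ k)
      ((1 / (2 * (Real.pi : ℂ) * Complex.I)) *
        ∮ t in C(0, r), (∑' k : ℕ, c k * t ^ k) * Complex.exp (s / t) / t) := by
  obtain ⟨ρ, hrρ, hρR⟩ := exists_between hrR
  have hρ : ‖(ρ : ℂ)‖ = ρ := by simp [abs_of_pos (hr.trans hrρ)]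
  have hc : Summable fun k => ‖c k‖ * r ^ k :=
    summable_norm_mul_pow_of_summable_mul_pow (hconv ρ (hρ.symm ▸ hρR)) hr.le (hρ.symm ▸ hrρ)
  have hsum := hasSum_circleIntegral_fourierLaplaceTerm c s hr hc
  simp only [circleIntegral_fourierLaplaceTerm c s hr] at hsum
  have hdiag := (hasSum_ite_fst_eq_snd_iff
    (f := fun k => 2 * π * I * (c k / k.factorial * s ^ k))).1 hsum
  have h2πI : 2 * (π : ℂ) * I ≠ 0 := by simp [pi_ne_zero]
  simpa only [← mul_assoc, inv_mul_cancel₀ h2πI, one_mul, one_div] using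
    hdiag.mul_left (2 * π * I)⁻¹
end

section
/- Let \phi(x_1,x_2,x_3) = \frac{(1-x_1)(1-x_2)(1-x_3)(1 - x_1 - x_2 + x_1 x_2 - x_1 x_2 x_3)}{-\,x_1 x_2 x_3}, a Laurent polynomial in three variables. Then for every k \ge 0, the constant term of \phi^k (the coefficient of x_1^0 x_2^0 x_3^0 in the Laurent expansion of \phi(x)^k) equals the Apéry number \sum_{\ell=0}^{k} \binom{k}{\ell}^2 \binom{k+\ell}{\ell}^2. -/
/-!
With `x = x₁x₂x₃`, the last factor of `φ` is `(1-x₁)(1-x₂) - x`, so `φ = -x⁻¹ A (B - x)` with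
`A = (1-x₁)(1-x₂)(1-x₃)` and `B = (1-x₁)(1-x₂)`. Expanding `(B - x)ᵏ` binomially, the powers of
`x` cancel against `x⁻ᵏ` down to `x⁻ʲ`, so
`φᵏ = ∑ⱼ C(k,j) (-x)⁻ʲ (1-x₁)ᵏ⁺ʲ (1-x₂)ᵏ⁺ʲ (1-x₃)ᵏ`.
The constant term of the `j`-th summand is, up to sign, the coefficient of `x₁ʲx₂ʲx₃ʲ` in a
product of polynomials in separate variables, namely `C(k+j,j)² C(k,j)`; the signs cancel, and
together with `C(k,j)` this is the `j`-th Apéry summand.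
-/

/-- The `i`-th coordinate variable `xᵢ`, as an element of the ring of Laurent polynomials in
three variables (the group algebra of `ℤ³` over `ℂ`). -/
noncomputable def X3 (i : Fin 3) : AddMonoidAlgebra ℂ (Fin 3 → ℤ) :=
  AddMonoidAlgebra.single (Pi.single i 1) 1

/-- The Minkowski Laurent polynomial
`φ = (1-x₁)(1-x₂)(1-x₃)(1-x₁-x₂+x₁x₂-x₁x₂x₃) / (-x₁x₂x₃)`
of the Landau–Ginzburg model mirror to the Fano threefold `V₁₂`. -/
noncomputable def phiV12 : AddMonoidAlgebra ℂ (Fin 3 → ℤ) :=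
  AddMonoidAlgebra.single (fun _ => (-1 : ℤ)) (-1 : ℂ) *
    ((1 - X3 0) * (1 - X3 1) * (1 - X3 2) *
      (1 - X3 0 - X3 1 + X3 0 * X3 1 - X3 0 * X3 1 * X3 2))

open Finset AddMonoidAlgebra

local notation "ℂ[ℤ³]" => AddMonoidAlgebra ℂ (Fin 3 → ℤ)

section

variable {R : Type*} [CommRing R]

theorem neg_mul_mul_sub_pow_of_mul_eq_one {u w : R} (h : u * w = 1) (a b : R) (k : ℕ) :
    (-u * a * (b - w)) ^ k =
      ∑ j ∈ range (k + 1), (k.choose j : R) * (-u) ^ j * (a ^ k * b ^ j) := by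
  rw [mul_pow, sub_eq_add_neg, add_pow, mul_sum]
  refine sum_congr rfl fun j hj => ?_
  obtain ⟨d, rfl⟩ : ∃ d, k = j + d := ⟨k - j, by grind⟩
  have hcancel : (-u) ^ (j + d) * (-w) ^ d = (-u) ^ j := by
    rw [pow_add, mul_assoc, ← mul_pow, neg_mul_neg, h, one_pow, mul_one]
  rw [Nat.add_sub_cancel_left, mul_pow]
  linear_combination ((j + d).choose j * a ^ (j + d) * b ^ j : R) * hcancel

theorem AddMonoidAlgebra.one_sub_single_pow {M : Type*} [AddCommMonoid M] (m : M) (n : ℕ) :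
    (1 - single m 1 : AddMonoidAlgebra R M) ^ n =
      ∑ p ∈ range (n + 1), single (p • m) ((-1) ^ p * (n.choose p : R)) := by
  rw [sub_eq_add_neg, add_comm, add_pow]
  refine sum_congr rfl fun p _ => ?_
  rw [← single_neg, single_pow, one_pow, mul_one, natCast_def, single_mul_single, add_zero]

theorem AddMonoidAlgebra.coeff_prod_one_sub_single_pow {ι : Type*} [Fintype ι] [DecidableEq ι]
    (n m : ι → ℕ) :
    (∏ i, (1 - single (Pi.single i 1) 1 : AddMonoidAlgebra R (ι → ℤ)) ^ n i).coeff
        (fun i => (m i : ℤ)) = ∏ i, (-1) ^ m i * ((n i).choose (m i) : R) := by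
  have hexp (p : ι → ℕ) : ∑ i, p i • (Pi.single i 1 : ι → ℤ) = fun i => (p i : ℤ) := by
    ext i; simp [Finset.sum_apply, Pi.single_apply]
  simp_rw [one_sub_single_pow, prod_univ_sum, prod_single, hexp, coeff_sum,
    Finsupp.finsetSum_apply, coeff_single, Finsupp.single_apply]
  have hcast (p : ι → ℕ) : ((fun i => (p i : ℤ)) = fun i => (m i : ℤ)) ↔ p = m := by
    simp [funext_iff]
  simp_rw [hcast, sum_ite_eq', Fintype.mem_piFinset, mem_range, Nat.lt_succ_iff]
  split_ifs with hle
  · rfl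
  · obtain ⟨i, hi⟩ := not_forall.1 hle
    exact (prod_eq_zero (mem_univ i) (by simp [Nat.choose_eq_zero_of_lt (not_le.1 hi)])).symm

theorem AddMonoidAlgebra.coeff_zero_neg_single_pow_mul {ι : Type*} (j : ℕ)
    (F : AddMonoidAlgebra R (ι → ℤ)) :
    ((-single (-1) 1) ^ j * F).coeff 0 = (-1) ^ j * F.coeff (fun _ => (j : ℤ)) := by
  rw [← single_neg, single_pow, coeff_single_mul_apply]
  congr 2
  ext; simp

end

theorem phiV12_eq :
    phiV12 = -single (-1) 1 * ((1 - X3 0) * (1 - X3 1) * (1 - X3 2)) *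
      ((1 - X3 0) * (1 - X3 1) - single 1 1) := by
  have hprod : X3 0 * X3 1 * X3 2 = single 1 1 := by
    simp only [X3, single_mul_single, mul_one]
    congr 1
    ext i; fin_cases i <;> simp
  have hunit : (single (fun _ => (-1 : ℤ)) (-1) : ℂ[ℤ³]) = -single (-1) 1 := by
    rw [← single_neg]; rfl
  rw [phiV12, ← hprod, hunit]
  ring

theorem phiV12_pow (k : ℕ) :
    phiV12 ^ k = ∑ j ∈ range (k + 1), (k.choose j : ℂ[ℤ³]) *
      (-single (-1) 1) ^ j * ∏ i, (1 - X3 i) ^ ![k + j, k + j, k] i := by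
  have hinv : (single (-1) 1 : ℂ[ℤ³]) * single 1 1 = 1 := by
    rw [single_mul_single, neg_add_cancel, mul_one, one_def]
  rw [phiV12_eq, neg_mul_mul_sub_pow_of_mul_eq_one hinv]
  refine sum_congr rfl fun j _ => ?_
  simp only [Fin.prod_univ_three, Matrix.cons_val, mul_pow, pow_add]
  ring

/-- The constant term of `φ^k` equals the Apéry number
`∑_{ℓ=0}^k (k choose ℓ)² ((k+ℓ) choose ℓ)²`. -/
theorem constant_term_phiV12_eq_apery (k : ℕ) :
    (phiV12 ^ k).coeff 0 =
      ∑ l ∈ Finset.range (k + 1),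
        ((k.choose l : ℂ)) ^ 2 * (((k + l).choose l : ℂ)) ^ 2 := by
  rw [phiV12_pow, coeff_sum, Finsupp.finsetSum_apply]
  refine sum_congr rfl fun j _ => ?_
  rw [mul_assoc, ← nsmul_eq_mul, coeff_smul_apply, coeff_zero_neg_single_pow_mul]
  simp only [X3, coeff_prod_one_sub_single_pow]
  have hsign : ((-1 : ℂ) ^ j) ^ 4 = 1 := by rw [← pow_mul, mul_comm, pow_mul]; norm_num
  simp only [Fin.prod_univ_three, Matrix.cons_val, nsmul_eq_mul]
  linear_combination ((k.choose j : ℂ) ^ 2 * ((k + j).choose j : ℂ) ^ 2) * hsign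
end

section
/- The iterated real integral \int_0^1 \int_{1-x_2}^{1} \frac{dx_1\,dx_2}{x_1 x_2} = \zeta(2) = \pi^2/6. Equivalently, \int_0^1 \frac{-\log(1-x_2)}{x_2}\, dx_2 = \pi^2/6. -/
/-! On `(0, 1)` the integrand expands as `-log (1 - x) / x = ∑ xⁿ / (n + 1)`; the terms are
nonnegative and integrate to `1 / (n + 1)²`, so termwise integration gives `ζ(2)`. -/

open Real MeasureTheory Set

lemma hasSum_one_div_nat_add_one_sq :
    HasSum (fun n : ℕ => 1 / ((n : ℝ) + 1) ^ 2) (π ^ 2 / 6) := by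
  simpa using (hasSum_nat_add_iff' 1).mpr hasSum_zeta_two

lemma hasSum_pow_div_add_one {x : ℝ} (hx : |x| < 1) (hx₀ : x ≠ 0) :
    HasSum (fun n : ℕ => x ^ n / (n + 1)) (-log (1 - x) / x) := by
  refine ((hasSum_pow_div_log_of_abs_lt_one hx).div_const x).congr_fun fun n => ?_
  rw [div_right_comm, pow_succ, mul_div_cancel_right₀ _ hx₀]

lemma integral_Ioo_pow_div_add_one (n : ℕ) :
    ∫ x in Ioo (0 : ℝ) 1, x ^ n / (n + 1) = 1 / ((n : ℝ) + 1) ^ 2 := by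
  rw [← integral_Ioc_eq_integral_Ioo, ← intervalIntegral.integral_of_le zero_le_one,
    intervalIntegral.integral_div, integral_pow, one_pow, zero_pow n.succ_ne_zero, sub_zero,
    div_div, sq]

theorem integral_neg_log_one_sub_div :
    ∫ x in (0 : ℝ)..1, -log (1 - x) / x = π ^ 2 / 6 := by
  have hseries : ∀ x ∈ Ioo (0 : ℝ) 1, -log (1 - x) / x = ∑' n : ℕ, x ^ n / (n + 1) :=
    fun x hx => ((hasSum_pow_div_add_one (by rw [abs_of_pos hx.1]; exact hx.2)
      hx.1.ne').tsum_eq).symm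
  have hint (n : ℕ) : IntegrableOn (fun x : ℝ => x ^ n / (n + 1)) (Ioo 0 1) :=
    ((continuous_pow n).div_const _).integrableOn_Icc.mono_set Ioo_subset_Icc_self
  have hnorm (n : ℕ) : ∫ x in Ioo (0 : ℝ) 1, ‖x ^ n / (n + 1)‖ = 1 / ((n : ℝ) + 1) ^ 2 := by
    rw [← integral_Ioo_pow_div_add_one n]
    refine setIntegral_congr_fun measurableSet_Ioo fun x hx => ?_
    exact norm_of_nonneg (by have := hx.1; positivity)
  rw [intervalIntegral.integral_of_le zero_le_one, integral_Ioc_eq_integral_Ioo,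
    setIntegral_congr_fun measurableSet_Ioo hseries,
    ← integral_tsum_of_summable_integral_norm hint
      (by simpa only [hnorm] using hasSum_one_div_nat_add_one_sq.summable)]
  simpa only [integral_Ioo_pow_div_add_one] using hasSum_one_div_nat_add_one_sq.tsum_eq

lemma integral_one_div_mul_const {a : ℝ} (ha : 0 < a) (c : ℝ) :
    ∫ t in a..1, 1 / (t * c) = -log a / c := by
  simp_rw [one_div, mul_inv_rev]
  rw [intervalIntegral.integral_const_mul, integral_inv_of_pos ha one_pos, one_div, log_inv,
    inv_mul_eq_div]

/-- `∫₀¹ ∫_{1-x₂}^1 dx₁ dx₂/(x₁x₂) = ζ(2) = π²/6`; equivalently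
`∫₀¹ (-log(1-x₂)/x₂) dx₂ = π²/6`. -/
theorem v0_of_V10 :
    (∫ x₂ in (0 : ℝ)..1, ∫ x₁ in (1 - x₂)..1, 1 / (x₁ * x₂)) = π ^ 2 / 6 ∧
      (∫ x₂ in (0 : ℝ)..1, -Real.log (1 - x₂) / x₂) = π ^ 2 / 6 := by
  refine ⟨?_, integral_neg_log_one_sub_div⟩
  rw [← integral_neg_log_one_sub_div]
  refine intervalIntegral.integral_congr_ae ?_
  filter_upwards [Measure.ae_ne volume 1] with x hx₁ hx
  rw [uIoc_of_le zero_le_one] at hx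
  exact integral_one_div_mul_const (sub_pos.2 (lt_of_le_of_ne hx.2 hx₁)) x
end

section
/- The triple integral over the unit cube \int_0^1 \int_0^1 \int_0^1 \frac{X_1(1-X_1)\,X_2(1-X_2)\,X_3(1-X_3)}{\big(1 - X_3 (1 - X_1 X_2)\big)^2}\, dX_1\,dX_2\,dX_3 = -12 + 10\,\zeta(3). -/
/-!
Integrating out `x₃` leaves `x₁(1-x₁) x₂(1-x₂) K(x₁x₂)` with
`K(z) = (1+z)(-log z)/(1-z)³ - 2/(1-z)² = ∑ₙ ((n+1)²(-log z) - 2(n+1)) zⁿ`.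
Since `-log (x₁x₂) = -log x₁ - log x₂`, every term of this series splits into products of
one-variable functions, and integrating over `x₂` and then `x₁` only involves the moments
`∫₀¹ xⁿ⁺¹(1-x) dx = 1/((n+2)(n+3))` and `∫₀¹ xⁿ⁺¹(1-x)(-log x) dx = 1/(n+2)² - 1/(n+3)²`.
Both steps are termwise integrations of series whose coefficients are dominated by a geometric
series, respectively by `1/(n+1)²`. The final series is a combination of shifted `∑ 1/m²` and
`∑ 1/m³` in which the `∑ 1/m²` parts cancel, leaving `-12 + 10 ζ(3)`.
-/

open Real Set MeasureTheory

section GeometricSeries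

variable {𝕜 : Type*} [NormedField 𝕜] {r : 𝕜}

theorem hasSum_succ_mul_geometric_of_norm_lt_one (hr : ‖r‖ < 1) :
    HasSum (fun n : ℕ ↦ ((n : 𝕜) + 1) * r ^ n) (1 / (1 - r) ^ 2) := by
  simpa using hasSum_choose_mul_geometric_of_norm_lt_one 1 hr

theorem hasSum_succ_sq_mul_geometric_of_norm_lt_one (hr : ‖r‖ < 1) :
    HasSum (fun n : ℕ ↦ ((n : 𝕜) + 1) ^ 2 * r ^ n) ((1 + r) / (1 - r) ^ 3) := by
  have hr₁ : 1 - r ≠ 0 := by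
    rintro h
    simp [← sub_eq_zero.1 h] at hr
  have hterm (n : ℕ) : ((n : 𝕜) + 1) ^ 2 * r ^ n =
      2 * (((n + 2).choose 2 : ℕ) * r ^ n) - ((n : 𝕜) + 1) * r ^ n := by
    have h₀ : (n + 2).choose 2 * 2 = (n + 2) * (n + 1) := by
      simpa [mul_comm] using (Nat.add_one_mul_choose_eq (n + 1) 1).symm
    have h : (((n + 2).choose 2 : ℕ) : 𝕜) * 2 = ((n : 𝕜) + 2) * (n + 1) := by
      simpa using congrArg (Nat.cast : ℕ → 𝕜) h₀
    linear_combination (-r ^ n) * h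
  have hsum : (1 + r) / (1 - r) ^ 3 = 2 * (1 / (1 - r) ^ (2 + 1)) - 1 / (1 - r) ^ 2 := by
    field_simp
    ring
  simp_rw [hterm, hsum]
  exact ((hasSum_choose_mul_geometric_of_norm_lt_one 2 hr).mul_left 2).sub
    (hasSum_succ_mul_geometric_of_norm_lt_one hr)

end GeometricSeries

theorem integral_tsum_mul_add_mul_of_nonneg {α : Type*} [MeasurableSpace α] {μ : Measure α}
    {f g : ℕ → α → ℝ} (hf : ∀ n, Integrable (f n) μ) (hg : ∀ n, Integrable (g n) μ)
    (hf₀ : ∀ n, 0 ≤ᵐ[μ] f n) (hg₀ : ∀ n, 0 ≤ᵐ[μ] g n) {a b : ℕ → ℝ}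
    (hsum : Summable fun n ↦ |a n| * ∫ x, f n x ∂μ + |b n| * ∫ x, g n x ∂μ) :
    ∫ x, ∑' n, (a n * f n x + b n * g n x) ∂μ =
      ∑' n, (a n * ∫ x, f n x ∂μ + b n * ∫ x, g n x ∂μ) := by
  have hint (c d : ℝ) (n : ℕ) : Integrable (fun x ↦ c * f n x + d * g n x) μ :=
    ((hf n).const_mul c).add ((hg n).const_mul d)
  have hintegral (c d : ℝ) (n : ℕ) :
      ∫ x, (c * f n x + d * g n x) ∂μ = c * ∫ x, f n x ∂μ + d * ∫ x, g n x ∂μ := by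
    rw [integral_add ((hf n).const_mul c) ((hg n).const_mul d), integral_const_mul,
      integral_const_mul]
  have hnorm (n : ℕ) : ∫ x, ‖a n * f n x + b n * g n x‖ ∂μ ≤
      |a n| * ∫ x, f n x ∂μ + |b n| * ∫ x, g n x ∂μ := by
    rw [← hintegral]
    refine integral_mono_ae (hint (a n) (b n) n).norm (hint |a n| |b n| n) ?_
    filter_upwards [hf₀ n, hg₀ n] with x hfx hgx
    calc ‖a n * f n x + b n * g n x‖ ≤ ‖a n * f n x‖ + ‖b n * g n x‖ := norm_add_le _ _
      _ = |a n| * f n x + |b n| * g n x := by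
        rw [norm_mul, norm_mul, Real.norm_of_nonneg hfx, Real.norm_of_nonneg hgx]
        rfl
  rw [← integral_tsum_of_summable_integral_norm (fun n ↦ hint (a n) (b n) n)
    (hsum.of_nonneg_of_le (fun n ↦ integral_nonneg fun _ ↦ norm_nonneg _) hnorm)]
  exact tsum_congr fun n ↦ hintegral (a n) (b n) n

theorem summable_one_div_succ_pow {p : ℕ} (hp : 1 < p) :
    Summable fun m : ℕ ↦ 1 / ((m : ℝ) + 1) ^ p := by
  simpa using (summable_nat_add_iff 1).2 (summable_one_div_nat_pow.2 hp)

theorem continuous_pow_succ_mul_neg_log (n : ℕ) :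
    Continuous fun x : ℝ ↦ x ^ (n + 1) * -log x := by
  have h (x : ℝ) : x ^ (n + 1) * -log x = x ^ n * negMulLog x := by
    rw [negMulLog, pow_succ]
    ring
  simp_rw [h]
  fun_prop

theorem integral_pow_succ_mul_neg_log (n : ℕ) :
    ∫ x in (0 : ℝ)..1, x ^ (n + 1) * -log x = 1 / ((n : ℝ) + 2) ^ 2 := by
  have hn : (n : ℝ) + 2 ≠ 0 := by positivity
  -- written with `negMulLog` so that it is continuous on `[0, 1]` and no improper limit is needed
  let F : ℝ → ℝ := fun x ↦
    x ^ (n + 2) / ((n : ℝ) + 2) ^ 2 + x ^ (n + 1) * negMulLog x / ((n : ℝ) + 2)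
  have hderiv : ∀ x ∈ Ioo (0 : ℝ) 1, HasDerivAt F (x ^ (n + 1) * -log x) x := by
    intro x hx
    have h : HasDerivAt F _ x := ((hasDerivAt_pow (n + 2) x).div_const _).add
      (((hasDerivAt_pow (n + 1) x).mul (hasDerivAt_negMulLog hx.1.ne')).div_const _)
    refine h.congr_deriv ?_
    rw [negMulLog]
    field_simp
    push_cast
    ring
  rw [intervalIntegral.integral_eq_sub_of_hasDerivAt_of_le zero_le_one (by fun_prop) hderiv
    ((continuous_pow_succ_mul_neg_log n).intervalIntegrable 0 1)]
  simp [F]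

namespace V12

noncomputable def moment (n : ℕ) : ℝ := ∫ x in (0 : ℝ)..1, x ^ (n + 1) * (1 - x)

noncomputable def logMoment (n : ℕ) : ℝ := ∫ x in (0 : ℝ)..1, x ^ (n + 1) * (1 - x) * -log x

theorem moment_eq (n : ℕ) : moment n = 1 / (((n : ℝ) + 2) * ((n : ℝ) + 3)) := by
  have h (x : ℝ) : x ^ (n + 1) * (1 - x) = x ^ (n + 1) - x ^ (n + 2) := by ring
  simp_rw [moment, h]
  rw [intervalIntegral.integral_sub ((continuous_pow _).intervalIntegrable 0 1)
    ((continuous_pow _).intervalIntegrable 0 1), integral_pow, integral_pow]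
  field_simp
  push_cast
  ring

theorem logMoment_eq (n : ℕ) : logMoment n = 1 / ((n : ℝ) + 2) ^ 2 - 1 / ((n : ℝ) + 3) ^ 2 := by
  have h (x : ℝ) : x ^ (n + 1) * (1 - x) * -log x =
      x ^ (n + 1) * -log x - x ^ (n + 1 + 1) * -log x := by ring
  simp_rw [logMoment, h]
  rw [intervalIntegral.integral_sub
    ((continuous_pow_succ_mul_neg_log n).intervalIntegrable 0 1)
    ((continuous_pow_succ_mul_neg_log (n + 1)).intervalIntegrable 0 1),
    integral_pow_succ_mul_neg_log, integral_pow_succ_mul_neg_log]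
  push_cast
  ring

theorem moment_nonneg (n : ℕ) : 0 ≤ moment n := by
  rw [moment_eq]
  positivity

theorem logMoment_nonneg (n : ℕ) : 0 ≤ logMoment n := by
  rw [logMoment_eq, sub_nonneg]
  gcongr
  linarith

theorem sq_mul_moment_le_one (n : ℕ) : ((n : ℝ) + 1) ^ 2 * moment n ≤ 1 := by
  rw [moment_eq, mul_one_div, div_le_one (by positivity)]
  nlinarith

theorem sq_mul_logMoment_le_one (n : ℕ) : ((n : ℝ) + 1) ^ 2 * logMoment n ≤ 1 := by
  calc ((n : ℝ) + 1) ^ 2 * logMoment n ≤ ((n : ℝ) + 1) ^ 2 * (1 / ((n : ℝ) + 2) ^ 2) := by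
        rw [logMoment_eq]
        gcongr
        exact sub_le_self _ (by positivity)
    _ ≤ 1 := by
        rw [mul_one_div, div_le_one (by positivity)]
        gcongr
        linarith

theorem integral_tsum_moments {a b : ℕ → ℝ}
    (hsum : Summable fun n ↦ |a n| * moment n + |b n| * logMoment n) :
    ∫ x in (0 : ℝ)..1,
        ∑' n, (a n * (x ^ (n + 1) * (1 - x)) + b n * (x ^ (n + 1) * (1 - x) * -log x)) =
      ∑' n, (a n * moment n + b n * logMoment n) := by
  have hcont (n : ℕ) : Continuous fun x : ℝ ↦ x ^ (n + 1) * (1 - x) * -log x := by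
    have := continuous_pow_succ_mul_neg_log n
    exact (by fun_prop : Continuous fun x : ℝ ↦ x ^ (n + 1) * -log x * (1 - x)).congr
      fun x ↦ by ring
  have hg (n : ℕ) {x : ℝ} (hx : x ∈ Ioc 0 1) : 0 ≤ x ^ (n + 1) * (1 - x) :=
    mul_nonneg (pow_nonneg hx.1.le _) (sub_nonneg.2 hx.2)
  simp only [moment, logMoment, intervalIntegral.integral_of_le zero_le_one] at hsum ⊢
  refine integral_tsum_mul_add_mul_of_nonneg
    (fun n ↦ (by fun_prop : Continuous _).integrableOn_Ioc) (fun n ↦ (hcont n).integrableOn_Ioc)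
    (fun n ↦ ae_restrict_of_forall_mem measurableSet_Ioc fun x hx ↦ hg n hx)
    (fun n ↦ ae_restrict_of_forall_mem measurableSet_Ioc fun x hx ↦
      mul_nonneg (hg n hx) (neg_nonneg.2 (log_nonpos hx.1.le hx.2))) hsum

noncomputable def kernel (z : ℝ) : ℝ := (1 + z) * -log z / (1 - z) ^ 3 - 2 / (1 - z) ^ 2

theorem integral_mul_one_sub_div_one_sub_mul_sq {z : ℝ} (hz₀ : 0 < z) (hz₁ : z ≠ 1) :
    ∫ x in (0 : ℝ)..1, x * (1 - x) / (1 - x * (1 - z)) ^ 2 = kernel z := by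
  have hz : 1 - z ≠ 0 := sub_ne_zero.2 hz₁.symm
  have hd {x : ℝ} (hx : x ∈ uIcc 0 1) : 0 < 1 - x * (1 - z) := by
    rw [uIcc_of_le zero_le_one] at hx
    nlinarith [mul_nonneg hx.1 hz₀.le, mul_nonneg (sub_nonneg.2 hx.2) hz₀.le, hx.1, hx.2]
  let G : ℝ → ℝ := fun x ↦
    -x / (1 - z) ^ 2 - (1 + z) * log (1 - x * (1 - z)) / (1 - z) ^ 3 -
      z / ((1 - z) ^ 3 * (1 - x * (1 - z)))
  have hderiv : ∀ x ∈ uIcc (0 : ℝ) 1, HasDerivAt G (x * (1 - x) / (1 - x * (1 - z)) ^ 2) x := by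
    intro x hx
    have hlin : HasDerivAt (fun x ↦ 1 - x * (1 - z)) (-(1 - z)) x := by
      simpa using ((hasDerivAt_id x).mul_const (1 - z)).const_sub 1
    have h : HasDerivAt G _ x := ((((hasDerivAt_id x).neg).div_const _).sub
      (((hlin.log (hd hx).ne').const_mul (1 + z)).div_const _)).sub
      (((hlin.const_mul ((1 - z) ^ 3)).inv (by have := hd hx; positivity)).const_mul z)
    refine h.congr_deriv ?_
    have : 1 - (1 - z) * x ≠ 0 := by simpa only [mul_comm] using (hd hx).ne'
    field_simp
    ring
  have hint : IntervalIntegrable (fun x ↦ x * (1 - x) / (1 - x * (1 - z)) ^ 2) volume 0 1 :=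
    ContinuousOn.intervalIntegrable (by
      refine ContinuousOn.div (by fun_prop) (by fun_prop) fun x hx ↦ ?_
      exact pow_ne_zero 2 (hd hx).ne')
  rw [intervalIntegral.integral_eq_sub_of_hasDerivAt hderiv hint]
  simp only [G, kernel, zero_mul, one_mul, sub_zero, sub_sub_cancel, log_one]
  field_simp
  ring

theorem hasSum_kernel {z : ℝ} (hz : |z| < 1) :
    HasSum (fun n : ℕ ↦ (((n : ℝ) + 1) ^ 2 * -log z - 2 * ((n : ℝ) + 1)) * z ^ n) (kernel z) := by
  have hr : ‖z‖ < 1 := hz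
  have h := ((hasSum_succ_sq_mul_geometric_of_norm_lt_one hr).mul_left (-log z)).sub
    ((hasSum_succ_mul_geometric_of_norm_lt_one hr).mul_left 2)
  have hterm (n : ℕ) : (((n : ℝ) + 1) ^ 2 * -log z - 2 * ((n : ℝ) + 1)) * z ^ n =
      -log z * (((n : ℝ) + 1) ^ 2 * z ^ n) - 2 * (((n : ℝ) + 1) * z ^ n) := by ring
  have hsum : kernel z = -log z * ((1 + z) / (1 - z) ^ 3) - 2 * (1 / (1 - z) ^ 2) := by
    rw [kernel]
    ring
  simp_rw [hterm, hsum]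
  exact h

theorem integral_mul_one_sub_mul_kernel {t : ℝ} (ht : t ∈ Ioo 0 1) :
    ∫ y in (0 : ℝ)..1, y * (1 - y) * kernel (t * y) =
      ∑' n : ℕ, (((n : ℝ) + 1) ^ 2 * (moment n * -log t + logMoment n) -
        2 * ((n : ℝ) + 1) * moment n) * t ^ n := by
  set L := -log t
  set a : ℕ → ℝ := fun n ↦ (((n : ℝ) + 1) ^ 2 * L - 2 * ((n : ℝ) + 1)) * t ^ n
  set b : ℕ → ℝ := fun n ↦ ((n : ℝ) + 1) ^ 2 * t ^ n
  have hexpand : EqOn (fun y ↦ y * (1 - y) * kernel (t * y)) (fun y ↦ ∑' n,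
      (a n * (y ^ (n + 1) * (1 - y)) + b n * (y ^ (n + 1) * (1 - y) * -log y))) (Ioo 0 1) := by
    intro y hy
    have hty : |t * y| < 1 := by
      rw [abs_lt]
      constructor <;> nlinarith [ht.1, ht.2, hy.1, hy.2]
    refine ((hasSum_kernel hty).mul_left (y * (1 - y))).tsum_eq.symm.trans (tsum_congr fun n ↦ ?_)
    rw [log_mul ht.1.ne' hy.1.ne', mul_pow]
    ring
  have hsum : Summable fun n ↦ |a n| * moment n + |b n| * logMoment n := by
    have hL₀ : 0 ≤ L := neg_nonneg.2 (log_nonpos ht.1.le ht.2.le)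
    refine Summable.of_nonneg_of_le (fun n ↦ ?_) (fun n ↦ ?_)
      ((summable_geometric_of_lt_one ht.1.le ht.2).mul_left (L + 3))
    · have := moment_nonneg n
      have := logMoment_nonneg n
      positivity
    have htn : 0 ≤ t ^ n := pow_nonneg ht.1.le n
    have hn : (1 : ℝ) ≤ (n : ℝ) + 1 := le_add_of_nonneg_left n.cast_nonneg
    have ha : |a n| ≤ (L + 2) * (((n : ℝ) + 1) ^ 2 * t ^ n) := by
      rw [abs_mul, abs_of_nonneg htn, ← mul_assoc]
      gcongr
      exact abs_le.2 ⟨by nlinarith, by nlinarith⟩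
    have hb : |b n| = ((n : ℝ) + 1) ^ 2 * t ^ n := abs_of_nonneg (by positivity)
    have := moment_nonneg n
    have := logMoment_nonneg n
    calc |a n| * moment n + |b n| * logMoment n
        ≤ (L + 2) * (((n : ℝ) + 1) ^ 2 * t ^ n) * moment n +
          ((n : ℝ) + 1) ^ 2 * t ^ n * logMoment n := by
          rw [hb]
          gcongr
      _ = t ^ n * ((L + 2) * (((n : ℝ) + 1) ^ 2 * moment n) +
          ((n : ℝ) + 1) ^ 2 * logMoment n) := by ring
      _ ≤ t ^ n * ((L + 2) * 1 + 1) := by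
          gcongr
          exacts [sq_mul_moment_le_one n, sq_mul_logMoment_le_one n]
      _ = (L + 3) * t ^ n := by ring
  rw [intervalIntegral.integral_congr_Ioo_of_le zero_le_one hexpand, integral_tsum_moments hsum]
  exact tsum_congr fun n ↦ by ring

theorem integral_mul_one_sub_mul_tsum :
    ∫ x in (0 : ℝ)..1, x * (1 - x) * ∑' n : ℕ, (((n : ℝ) + 1) ^ 2 *
        (moment n * -log x + logMoment n) - 2 * ((n : ℝ) + 1) * moment n) * x ^ n =
      ∑' n : ℕ, (2 * ((n : ℝ) + 1) ^ 2 * moment n * logMoment n -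
        2 * ((n : ℝ) + 1) * moment n ^ 2) := by
  set p : ℕ → ℝ := fun n ↦ ((n : ℝ) + 1) ^ 2 * moment n
  set q : ℕ → ℝ := fun n ↦ ((n : ℝ) + 1) ^ 2 * logMoment n - 2 * ((n : ℝ) + 1) * moment n
  have hexpand (x : ℝ) : x * (1 - x) * ∑' n : ℕ, (((n : ℝ) + 1) ^ 2 *
        (moment n * -log x + logMoment n) - 2 * ((n : ℝ) + 1) * moment n) * x ^ n =
      ∑' n, (q n * (x ^ (n + 1) * (1 - x)) + p n * (x ^ (n + 1) * (1 - x) * -log x)) := by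
    rw [← tsum_mul_left]
    exact tsum_congr fun n ↦ by ring
  have hsum : Summable fun n ↦ |q n| * moment n + |p n| * logMoment n := by
    refine Summable.of_nonneg_of_le (fun n ↦ ?_) (fun n ↦ ?_)
      ((summable_one_div_succ_pow one_lt_two).mul_left 4)
    · have := moment_nonneg n
      have := logMoment_nonneg n
      positivity
    have hM := moment_nonneg n
    have hC := logMoment_nonneg n
    have hM₁ := sq_mul_moment_le_one n
    have hC₁ := sq_mul_logMoment_le_one n
    have hM₂ : ((n : ℝ) + 1) * moment n ≤ ((n : ℝ) + 1) ^ 2 * moment n := by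
      nlinarith [mul_nonneg (n.cast_nonneg : (0 : ℝ) ≤ n) hM]
    have hq : |q n| ≤ 3 := abs_le.2 ⟨by simp only [q]; nlinarith, by simp only [q]; nlinarith⟩
    have hp : |p n| ≤ 1 := abs_le.2 ⟨by nlinarith, hM₁⟩
    have hM' : moment n ≤ 1 / ((n : ℝ) + 1) ^ 2 := by
      rw [le_div_iff₀ (by positivity)]; linarith
    have hC' : logMoment n ≤ 1 / ((n : ℝ) + 1) ^ 2 := by
      rw [le_div_iff₀ (by positivity)]; linarith
    nlinarith [abs_nonneg (q n), abs_nonneg (p n)]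
  rw [intervalIntegral.integral_congr (fun x _ ↦ hexpand x), integral_tsum_moments hsum]
  exact tsum_congr fun n ↦ by ring

theorem tsum_moment_mul_logMoment :
    ∑' n : ℕ, (2 * ((n : ℝ) + 1) ^ 2 * moment n * logMoment n -
        2 * ((n : ℝ) + 1) * moment n ^ 2) = -12 + 10 * ∑' m : ℕ, 1 / ((m : ℝ) + 1) ^ 3 := by
  set u : ℕ → ℝ := fun m ↦ 1 / ((m : ℝ) + 1) ^ 2
  set v : ℕ → ℝ := fun m ↦ 1 / ((m : ℝ) + 1) ^ 3
  have hu : HasSum u (∑' m, u m) := (summable_one_div_succ_pow one_lt_two).hasSum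
  have hv : HasSum v (∑' m, v m) := (summable_one_div_succ_pow (by norm_num)).hasSum
  have h := ((((hasSum_nat_add_iff' 1).2 hu).mul_left (-4)).add
    (((hasSum_nat_add_iff' 2).2 hu).mul_left 4)).add
    ((((hasSum_nat_add_iff' 1).2 hv).mul_left 2).add (((hasSum_nat_add_iff' 2).2 hv).mul_left 8))
  calc ∑' n : ℕ, (2 * ((n : ℝ) + 1) ^ 2 * moment n * logMoment n -
        2 * ((n : ℝ) + 1) * moment n ^ 2)
      = ∑' n : ℕ, (-4 * u (n + 1) + 4 * u (n + 2) + (2 * v (n + 1) + 8 * v (n + 2))) :=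
        tsum_congr fun n ↦ by
          simp only [u, v, moment_eq, logMoment_eq]
          push_cast
          field_simp
          ring
    _ = -12 + 10 * ∑' m : ℕ, v m := by
        rw [h.tsum_eq]
        simp [Finset.sum_range_succ, u, v]
        ring

end V12

open V12

/-- The Beukers-type integral `v₁` of the Landau–Ginzburg model of `V₁₂`:
`∫₀¹∫₀¹∫₀¹ X₁(1-X₁)X₂(1-X₂)X₃(1-X₃)/(1 - X₃(1 - X₁X₂))² dX₁dX₂dX₃ = -12 + 10ζ(3)`. -/
theorem v1_of_V12 :
    (∫ x₁ in (0 : ℝ)..1, ∫ x₂ in (0 : ℝ)..1, ∫ x₃ in (0 : ℝ)..1,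
        (x₁ * (1 - x₁) * (x₂ * (1 - x₂)) * (x₃ * (1 - x₃))) /
          (1 - x₃ * (1 - x₁ * x₂)) ^ 2)
      = -12 + 10 * ∑' m : ℕ, 1 / ((m : ℝ) + 1) ^ 3 := by
  calc _ = ∫ x₁ in (0 : ℝ)..1, x₁ * (1 - x₁) * ∫ x₂ in (0 : ℝ)..1,
        x₂ * (1 - x₂) * kernel (x₁ * x₂) := by
        refine intervalIntegral.integral_congr_Ioo_of_le zero_le_one fun x₁ hx₁ ↦ ?_
        rw [← intervalIntegral.integral_const_mul]
        refine intervalIntegral.integral_congr_Ioo_of_le zero_le_one fun x₂ hx₂ ↦ ?_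
        have hz₁ : x₁ * x₂ ≠ 1 :=
          (mul_lt_one_of_nonneg_of_lt_one_left hx₁.1.le hx₁.2 hx₂.2.le).ne
        rw [← integral_mul_one_sub_div_one_sub_mul_sq (mul_pos hx₁.1 hx₂.1) hz₁,
          ← intervalIntegral.integral_const_mul, ← intervalIntegral.integral_const_mul]
        congr 1 with x₃
        ring
    _ = ∫ x₁ in (0 : ℝ)..1, x₁ * (1 - x₁) * ∑' n : ℕ, (((n : ℝ) + 1) ^ 2 *
        (moment n * -log x₁ + logMoment n) - 2 * ((n : ℝ) + 1) * moment n) * x₁ ^ n :=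
        intervalIntegral.integral_congr_Ioo_of_le zero_le_one fun x₁ hx₁ ↦ by
          rw [integral_mul_one_sub_mul_kernel hx₁]
    _ = _ := by rw [integral_mul_one_sub_mul_tsum, tsum_moment_mul_logMoment]
end
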